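/- Let A = ({a,b,c}, Q, δ) be a weakly acyclic automaton with n = |Q| states and let R = { q ∈ Q : δ(q, a) = q and δ(q, b) = q }. Then A has a synchronizing word belonging to the language (a+b)*cc* (i.e., a word of the form u c^{j} with u ∈ {a,b}* and j ≥ 1) if and only if there exists an integer i with 0 ≤ i ≤ n such that δ(R, c^{i+1}) is a singleton. -/

import Mathlib

/-- A three-letter alphabet `{a, b, c}`. -/
inductive ABC : Type
  | a | b | c
  deriving DecidableEq

instance : Fintype ABC where
  elems := {ABC.a, ABC.b, ABC.c}
  complete := fun x => by cases x <;> simp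

/-- The transition function extended to words: `δ*(q, u)`. -/
def deltaStar {Q A : Type*} (δ : Q → A → Q) (q : Q) (u : List A) : Q :=
  u.foldl δ q

/-- A complete deterministic semi-automaton is weakly acyclic if all simple
cycles are self-loops. -/
def WeaklyAcyclic {Q A : Type*} (δ : Q → A → Q) : Prop :=
  ∀ (q : Q) (u : List A), u ≠ [] → deltaStar δ q u = q → ∀ x ∈ u, δ q x = q

/-!
In a weakly acyclic automaton every periodic point of the action of a word `w` is
fixed by each letter of `w`, so by pigeonhole `w^|Q|` drives every state to such a point. Hence
`(ab)^|Q|` maps all of `Q` into `R`, while words over `{a, b}` fix `R` pointwise; and `c^|Q|`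
already sends every state to its final `c`-fixed point, so `c^(|Q|+1)` acts on `R` exactly as
`u c^j` acts on `Q` followed by `c^|Q|`.
-/

open Function

theorem Function.isFixedPt_iterate_card {α : Type*} [Fintype α] {f : α → α}
    (hf : ∀ x k, 0 < k → IsPeriodicPt f k x → IsFixedPt f x) (x : α) :
    IsFixedPt f (f^[Fintype.card α] x) := by
  obtain ⟨i, j, hne, hij⟩ := Fintype.exists_ne_map_eq_of_card_lt
    (fun i : Fin (Fintype.card α + 1) => f^[i] x) (by simp)
  wlog hlt : (i : ℕ) < j generalizing i j
  · exact this j i hne.symm hij.symm (by omega)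
  have hfix : IsFixedPt f (f^[i] x) := by
    refine hf _ (j - i) (by omega) ?_
    change f^[j - i] (f^[i] x) = f^[i] x
    rw [← iterate_add_apply, Nat.sub_add_cancel hlt.le]
    exact hij.symm
  rw [show Fintype.card α = (Fintype.card α - i) + i by omega, iterate_add_apply,
    (hfix.iterate _).eq]
  exact hfix

section deltaStar

variable {Q A : Type*} (δ : Q → A → Q)

theorem deltaStar_append (q : Q) (u v : List A) :
    deltaStar δ q (u ++ v) = deltaStar δ (deltaStar δ q u) v :=
  List.foldl_append ..

theorem deltaStar_flatten_replicate (w : List A) (k : ℕ) (q : Q) :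
    deltaStar δ q (List.replicate k w).flatten = (deltaStar δ · w)^[k] q := by
  induction k generalizing q with
  | zero => rfl
  | succ k ih =>
    rw [List.replicate_succ, List.flatten_cons, deltaStar_append, ih, iterate_succ_apply]

theorem deltaStar_replicate (x : A) (k : ℕ) (q : Q) :
    deltaStar δ q (List.replicate k x) = (δ · x)^[k] q := by
  rw [← List.flatten_replicate_singleton]
  exact deltaStar_flatten_replicate δ [x] k q

theorem deltaStar_eq_self {q : Q} {u : List A} (h : ∀ x ∈ u, δ q x = q) :
    deltaStar δ q u = q := by
  induction u with
  | nil => rfl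
  | cons x u ih =>
    change deltaStar δ (δ q x) u = q
    rw [h x List.mem_cons_self]
    exact ih fun y hy => h y (List.mem_cons_of_mem x hy)

end deltaStar

namespace WeaklyAcyclic

variable {Q A : Type*} {δ : Q → A → Q}

theorem forall_apply_eq_of_isPeriodicPt (hwa : WeaklyAcyclic δ) {w : List A} {k : ℕ} {q : Q}
    (hk : 0 < k) (hq : IsPeriodicPt (deltaStar δ · w) k q) : ∀ x ∈ w, δ q x = q := by
  intro x hx
  have hmem : x ∈ (List.replicate k w).flatten :=
    List.mem_flatten.2 ⟨w, List.mem_replicate.2 ⟨hk.ne', rfl⟩, hx⟩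
  refine hwa q _ (List.ne_nil_of_mem hmem) ?_ x hmem
  rw [deltaStar_flatten_replicate]
  exact hq

theorem isFixedPt_iterate_card [Fintype Q] (hwa : WeaklyAcyclic δ) (w : List A) (q : Q) :
    IsFixedPt (deltaStar δ · w) ((deltaStar δ · w)^[Fintype.card Q] q) :=
  Function.isFixedPt_iterate_card
    (fun _ _ hk hq => deltaStar_eq_self δ (hwa.forall_apply_eq_of_isPeriodicPt hk hq)) q

theorem forall_apply_iterate_card_eq [Fintype Q] (hwa : WeaklyAcyclic δ) (w : List A) (q : Q) :
    ∀ x ∈ w, δ ((deltaStar δ · w)^[Fintype.card Q] q) x =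
      (deltaStar δ · w)^[Fintype.card Q] q :=
  hwa.forall_apply_eq_of_isPeriodicPt one_pos ((hwa.isFixedPt_iterate_card w q).isPeriodicPt 1)

end WeaklyAcyclic

/-- A weakly acyclic automaton over `{a,b,c}` with `n` states has a
synchronizing word in the language `(a+b)*cc*` iff there is some `0 ≤ i ≤ n`
such that `δ(R, c^(i+1))` is a singleton, where
`R = {q | δ(q,a) = q ∧ δ(q,b) = q}`. -/
theorem sync_constraint_abStar_c_cStar {Q : Type*} [Fintype Q] [Nonempty Q]
    (δ : Q → ABC → Q) (hwa : WeaklyAcyclic δ) :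
    (∃ (u : List ABC) (j : ℕ), 1 ≤ j ∧ (∀ x ∈ u, x = ABC.a ∨ x = ABC.b) ∧
        ∃ q : Q, ∀ p : Q,
          deltaStar δ p (u ++ List.replicate j ABC.c) = q) ↔
      ∃ i ≤ Fintype.card Q, ∃ q : Q,
        (fun r => deltaStar δ r (List.replicate (i + 1) ABC.c)) ''
          {p : Q | δ p ABC.a = p ∧ δ p ABC.b = p} = {q} := by
  set n := Fintype.card Q
  set R := {p : Q | δ p ABC.a = p ∧ δ p ABC.b = p}
  have hR (p : Q) : deltaStar δ p (List.replicate n [ABC.a, ABC.b]).flatten ∈ R := by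
    have h := hwa.forall_apply_iterate_card_eq [ABC.a, ABC.b] p
    rw [deltaStar_flatten_replicate]
    exact ⟨h _ (by simp), h _ (by simp)⟩
  have hfixR {r : Q} (hr : r ∈ R) {u : List ABC} (hu : ∀ x ∈ u, x = ABC.a ∨ x = ABC.b) :
      deltaStar δ r u = r :=
    deltaStar_eq_self δ fun x hx => by rcases hu x hx with rfl | rfl; exacts [hr.1, hr.2]
  constructor
  · rintro ⟨u, j, -, hu, q, hsync⟩
    obtain ⟨p⟩ := ‹Nonempty Q›
    refine ⟨n, le_rfl, (δ · ABC.c)^[n] q,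
      (Set.Nonempty.image _ ⟨_, hR p⟩).subset_singleton_iff.1 ?_⟩
    rintro _ ⟨r, hr, rfl⟩
    have hc : IsFixedPt (δ · ABC.c) ((δ · ABC.c)^[n] r) := hwa.isFixedPt_iterate_card [ABC.c] r
    have hj : (δ · ABC.c)^[j] r = q := by
      rw [← deltaStar_replicate, ← hfixR hr hu, ← deltaStar_append]
      exact hsync r
    calc deltaStar δ r (List.replicate (n + 1) ABC.c)
        = (δ · ABC.c)^[j] ((δ · ABC.c)^[n] r) := by
          rw [deltaStar_replicate, iterate_succ_apply', hc.eq, (hc.iterate j).eq]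
      _ = (δ · ABC.c)^[n] q := by rw [← iterate_add_apply, add_comm, iterate_add_apply, hj]
  · rintro ⟨i, -, q, himg⟩
    refine ⟨(List.replicate n [ABC.a, ABC.b]).flatten, i + 1, by omega, by simp, q, fun p => ?_⟩
    rw [deltaStar_append, ← Set.mem_singleton_iff, ← himg]
    exact ⟨_, hR p, rfl⟩
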